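/- arXiv:1704.01672 — 4 statements merged into one kernel-verified Lean document; each statement's English description precedes it below -/
import Mathlib

section
/- Let E, A ∈ ℝ^{n×n}, B ∈ ℝ^{n×p}, and suppose M = [E, −B] ∈ ℝ^{n×(n+p)} has full row rank. Let M⁺ be a right inverse of M and N ∈ ℝ^{(n+p)×p} with range N = ker M and NᵀN = I. Define A_d, C_u by (A_d; C_u) = M⁺ A and B_d, D_u by (B_d; D_u) = N, partitioned with A_d, B_d having n rows. Then for all x, x⁺ ∈ ℝⁿ, u ∈ ℝᵖ: E x⁺ = A x + B u holds if and only if there exists s ∈ ℝᵖ with x⁺ = A_d x + B_d s and u = C_u x + D_u s. -/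
/-!
Writing `w = (x⁺, u)`, the descriptor equation `E x⁺ = A x + B u` says `M w = A x`. Since `M⁺ A x`
is one solution and the solutions of `M w = 0` are exactly the vectors `N s`, the solutions are
`w = M⁺ A x + N s`, which block by block is the driving-variable system.
-/

namespace Matrix

variable {R m k l : Type*} [Fintype m] [Fintype k] [Fintype l]

theorem mulVec_eq_iff_exists_of_mul_eq_one [CommRing R] [DecidableEq m]
    {M : Matrix m k R} {Mp : Matrix k m R} {N : Matrix k l R} (hMp : M * Mp = 1)
    (hrange : LinearMap.range N.mulVecLin = LinearMap.ker M.mulVecLin) (w : k → R) (y : m → R) :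
    M *ᵥ w = y ↔ ∃ s, w = Mp *ᵥ y + N *ᵥ s := by
  have hMMp : M *ᵥ (Mp *ᵥ y) = y := by rw [mulVec_mulVec, hMp, one_mulVec]
  have hmem : ∀ v, (∃ s, N *ᵥ s = v) ↔ M *ᵥ v = 0 := fun v =>
    SetLike.ext_iff.mp hrange v
  constructor
  · rintro rfl
    obtain ⟨s, hs⟩ := (hmem (w - Mp *ᵥ (M *ᵥ w))).mpr (by rw [mulVec_sub, hMMp, sub_self])
    exact ⟨s, by rw [hs, add_sub_cancel]⟩
  · rintro ⟨s, rfl⟩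
    rw [mulVec_add, hMMp, (hmem _).mp ⟨s, rfl⟩, add_zero]

theorem fromCols_neg_mulVec_sumElim_eq_iff [Ring R] {E A : Matrix m m R} {B : Matrix m l R}
    (x xp : m → R) (u : l → R) :
    fromCols E (-B) *ᵥ Sum.elim xp u = A *ᵥ x ↔ E *ᵥ xp = A *ᵥ x + B *ᵥ u := by
  rw [fromCols_mulVec_sumElim, neg_mulVec, ← sub_eq_add_neg, sub_eq_iff_eq_add]

theorem sumElim_eq_fromRows_mulVec_add_fromRows_mulVec_iff [Semiring R] {m₁ m₂ : Type*}
    {Ad : Matrix m₁ k R} {Cu : Matrix m₂ k R} {Bd : Matrix m₁ l R} {Du : Matrix m₂ l R}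
    (xp : m₁ → R) (u : m₂ → R) (x : k → R) (s : l → R) :
    Sum.elim xp u = fromRows Ad Cu *ᵥ x + fromRows Bd Du *ᵥ s ↔
      xp = Ad *ᵥ x + Bd *ᵥ s ∧ u = Cu *ᵥ x + Du *ᵥ s := by
  rw [fromRows_mulVec, fromRows_mulVec, ← Sum.elim_add_add, Sum.elim_eq_iff]

end Matrix

open Matrix in
theorem descriptor_dv_transition_equiv_general (n p : ℕ)
    (E A : Matrix (Fin n) (Fin n) ℝ) (B : Matrix (Fin n) (Fin p) ℝ)
    (M : Matrix (Fin n) (Fin n ⊕ Fin p) ℝ) (hMdef : M = Matrix.fromCols E (-B))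
    (Mp : Matrix (Fin n ⊕ Fin p) (Fin n) ℝ) (hMp : M * Mp = 1)
    (N : Matrix (Fin n ⊕ Fin p) (Fin p) ℝ)
    (hrange : LinearMap.range N.mulVecLin = LinearMap.ker M.mulVecLin)
    (Ad : Matrix (Fin n) (Fin n) ℝ) (Cu : Matrix (Fin p) (Fin n) ℝ)
    (hAdCu : Matrix.fromRows Ad Cu = Mp * A)
    (Bd : Matrix (Fin n) (Fin p) ℝ) (Du : Matrix (Fin p) (Fin p) ℝ)
    (hBdDu : Matrix.fromRows Bd Du = N) :
    ∀ (x xp : Fin n → ℝ) (u : Fin p → ℝ),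
      E.mulVec xp = A.mulVec x + B.mulVec u ↔
        ∃ s : Fin p → ℝ,
          xp = Ad.mulVec x + Bd.mulVec s ∧ u = Cu.mulVec x + Du.mulVec s := by
  intro x xp u
  rw [← fromCols_neg_mulVec_sumElim_eq_iff, ← hMdef,
    mulVec_eq_iff_exists_of_mul_eq_one hMp hrange, mulVec_mulVec, ← hAdCu, ← hBdDu]
  simp only [sumElim_eq_fromRows_mulVec_add_fromRows_mulVec_iff]

theorem descriptor_dv_transition_equiv (n p : ℕ)
    (E A : Matrix (Fin n) (Fin n) ℝ) (B : Matrix (Fin n) (Fin p) ℝ)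
    (M : Matrix (Fin n) (Fin n ⊕ Fin p) ℝ) (hMdef : M = Matrix.fromCols E (-B))
    (hrank : M.rank = n)
    (Mp : Matrix (Fin n ⊕ Fin p) (Fin n) ℝ) (hMp : M * Mp = 1)
    (N : Matrix (Fin n ⊕ Fin p) (Fin p) ℝ)
    (hrange : LinearMap.range N.mulVecLin = LinearMap.ker M.mulVecLin)
    (horth : N.transpose * N = 1)
    (Ad : Matrix (Fin n) (Fin n) ℝ) (Cu : Matrix (Fin p) (Fin n) ℝ)
    (hAdCu : Matrix.fromRows Ad Cu = Mp * A)
    (Bd : Matrix (Fin n) (Fin p) ℝ) (Du : Matrix (Fin p) (Fin p) ℝ)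
    (hBdDu : Matrix.fromRows Bd Du = N) :
    ∀ (x xp : Fin n → ℝ) (u : Fin p → ℝ),
      E.mulVec xp = A.mulVec x + B.mulVec u ↔
        ∃ s : Fin p → ℝ,
          xp = Ad.mulVec x + Bd.mulVec s ∧ u = Cu.mulVec x + Du.mulVec s :=
  descriptor_dv_transition_equiv_general n p E A B M hMdef Mp hMp N hrange Ad Cu hAdCu Bd Du hBdDu
end

section
/- Under the driving-variable construction (M = [E, −B] full row rank, (A_d; C_u) = M⁺A, (B_d; D_u) = N with range N = ker M, NᵀN = I), the descriptor system and its driving-variable system are bisimilar via the diagonal relation I = {(x, x) | x ∈ ℝⁿ}, where both systems have the same output map C and the same initial set X₀. -/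
/-!
Writing `z = (x⁺, u)`, a descriptor step `E x⁺ = A x + B u` says exactly `M z = A x` with
`M = [E, -B]`. Since `M M⁺ = 1` and `range N = ker M`, the solutions of this equation are the
points `z = M⁺ A x + N s`, whose top block is `A_d x + B_d s`. So both systems have the same
transition relation, and the diagonal is a simulation in each direction.
-/

/-- `R` is a simulation relation from system `(T₁, C₁)` to system `(T₂, C₂)`. -/
def IsSimulation {X₁ X₂ Y : Type*} (T₁ : X₁ → X₁ → Prop) (T₂ : X₂ → X₂ → Prop)
    (C₁ : X₁ → Y) (C₂ : X₂ → Y) (R : X₁ → X₂ → Prop) : Prop :=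
  ∀ x₁ x₂, R x₁ x₂ →
    C₁ x₁ = C₂ x₂ ∧
    ∀ x₁', T₁ x₁ x₁' → ∃ x₂', T₂ x₂ x₂' ∧ R x₁' x₂'

theorem isSimulation_eq_of_imp {X Y : Type*} {T₁ T₂ : X → X → Prop} (C : X → Y)
    (h : ∀ x x', T₁ x x' → T₂ x x') : IsSimulation T₁ T₂ C C (fun x x' => x = x') := by
  rintro x _ rfl
  exact ⟨rfl, fun x' hx' => ⟨x', h x x' hx', rfl⟩⟩

namespace Matrix

variable {R : Type*} [CommRing R]

theorem mulVec_eq_iff_exists_of_range_eq_ker {m n l : Type*} [Fintype m] [Fintype n]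
    [Fintype l] [DecidableEq m] {M : Matrix m n R} {Mp : Matrix n m R} (hMp : M * Mp = 1)
    {N : Matrix n l R} (hrange : LinearMap.range N.mulVecLin = LinearMap.ker M.mulVecLin)
    (z : n → R) (b : m → R) :
    M *ᵥ z = b ↔ ∃ s, z = Mp *ᵥ b + N *ᵥ s := by
  have hb : M *ᵥ (Mp *ᵥ b) = b := by rw [mulVec_mulVec, hMp, one_mulVec]
  calc M *ᵥ z = b ↔ z - Mp *ᵥ b ∈ LinearMap.ker M.mulVecLin := by
        simp [mulVec_sub, hb, sub_eq_zero]
    _ ↔ z - Mp *ᵥ b ∈ LinearMap.range N.mulVecLin := by rw [hrange]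
    _ ↔ ∃ s, z = Mp *ᵥ b + N *ᵥ s := by
        simp only [LinearMap.mem_range, mulVecLin_apply, eq_sub_iff_add_eq, add_comm, eq_comm]

variable {ι κ σ : Type*} [Fintype ι] [Fintype σ]

theorem fromCols_neg_mulVec_sumElim [Fintype κ] (E : Matrix ι ι R) (B : Matrix ι κ R)
    (x : ι → R) (u : κ → R) : fromCols E (-B) *ᵥ Sum.elim x u = E *ᵥ x - B *ᵥ u := by
  rw [fromCols_mulVec_sumElim, neg_mulVec, sub_eq_add_neg]

theorem mulVec_add_mulVec_eq_sumElim {A : Matrix ι ι R} {Mp : Matrix (ι ⊕ κ) ι R}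
    {N : Matrix (ι ⊕ κ) σ R} {Ad : Matrix ι ι R} {Cu : Matrix κ ι R} {Bd : Matrix ι σ R}
    {Du : Matrix κ σ R} (hAdCu : fromRows Ad Cu = Mp * A) (hBdDu : fromRows Bd Du = N)
    (x : ι → R) (s : σ → R) :
    Mp *ᵥ (A *ᵥ x) + N *ᵥ s = Sum.elim (Ad *ᵥ x + Bd *ᵥ s) (Cu *ᵥ x + Du *ᵥ s) := by
  rw [mulVec_mulVec, ← hAdCu, ← hBdDu, fromRows_mulVec, fromRows_mulVec, Sum.elim_add_add]

end Matrix

open Matrix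

theorem descriptor_step_iff_drivingVariable_step {R ι κ σ : Type*} [CommRing R] [Fintype ι]
    [Fintype κ] [Fintype σ] [DecidableEq ι] {E A : Matrix ι ι R} {B : Matrix ι κ R}
    {Mp : Matrix (ι ⊕ κ) ι R} (hMp : fromCols E (-B) * Mp = 1) {N : Matrix (ι ⊕ κ) σ R}
    (hrange : LinearMap.range N.mulVecLin = LinearMap.ker (fromCols E (-B)).mulVecLin)
    {Ad : Matrix ι ι R} {Cu : Matrix κ ι R} {Bd : Matrix ι σ R} {Du : Matrix κ σ R}
    (hAdCu : fromRows Ad Cu = Mp * A) (hBdDu : fromRows Bd Du = N) (x xp : ι → R) :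
    (∃ u, E *ᵥ xp = A *ᵥ x + B *ᵥ u) ↔ ∃ s, xp = Ad *ᵥ x + Bd *ᵥ s := by
  simp_rw [← sub_eq_iff_eq_add (b := B *ᵥ _), ← fromCols_neg_mulVec_sumElim,
    mulVec_eq_iff_exists_of_range_eq_ker hMp hrange, mulVec_add_mulVec_eq_sumElim hAdCu hBdDu,
    Sum.elim_eq_iff]
  constructor
  · rintro ⟨_, s, hxp, _⟩
    exact ⟨s, hxp⟩
  · rintro ⟨s, hxp⟩
    exact ⟨_, s, hxp, rfl⟩

theorem descriptor_dv_bisimilar_general (n p k : ℕ)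
    (E A : Matrix (Fin n) (Fin n) ℝ) (B : Matrix (Fin n) (Fin p) ℝ)
    (C : Matrix (Fin k) (Fin n) ℝ)
    (X₀ : Set (Fin n → ℝ))
    (M : Matrix (Fin n) (Fin n ⊕ Fin p) ℝ) (hMdef : M = Matrix.fromCols E (-B))
    (Mp : Matrix (Fin n ⊕ Fin p) (Fin n) ℝ) (hMp : M * Mp = 1)
    (N : Matrix (Fin n ⊕ Fin p) (Fin p) ℝ)
    (hrange : LinearMap.range N.mulVecLin = LinearMap.ker M.mulVecLin)
    (Ad : Matrix (Fin n) (Fin n) ℝ) (Cu : Matrix (Fin p) (Fin n) ℝ)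
    (hAdCu : Matrix.fromRows Ad Cu = Mp * A)
    (Bd : Matrix (Fin n) (Fin p) ℝ) (Du : Matrix (Fin p) (Fin p) ℝ)
    (hBdDu : Matrix.fromRows Bd Du = N)
    -- transition relation of the descriptor system
    (TDS : (Fin n → ℝ) → (Fin n → ℝ) → Prop)
    (hTDS : TDS = fun x xp => ∃ u : Fin p → ℝ,
      E.mulVec xp = A.mulVec x + B.mulVec u)
    -- transition relation of the driving-variable system
    (TDV : (Fin n → ℝ) → (Fin n → ℝ) → Prop)
    (hTDV : TDV = fun x xp => ∃ s : Fin p → ℝ,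
      xp = Ad.mulVec x + Bd.mulVec s) :
    IsSimulation TDS TDV C.mulVec C.mulVec (fun x x' => x = x') ∧
    IsSimulation TDV TDS C.mulVec C.mulVec (fun x x' => x = x') ∧
    (∀ x₀ ∈ X₀, ∃ x₀' ∈ X₀, x₀ = x₀') ∧
    (∀ x₀' ∈ X₀, ∃ x₀ ∈ X₀, x₀ = x₀') := by
  subst hMdef hTDS hTDV
  have step := descriptor_step_iff_drivingVariable_step hMp hrange hAdCu hBdDu
  exact ⟨isSimulation_eq_of_imp _ fun x xp => (step x xp).1,
    isSimulation_eq_of_imp _ fun x xp => (step x xp).2,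
    fun x hx => ⟨x, hx, rfl⟩, fun x hx => ⟨x, hx, rfl⟩⟩

theorem descriptor_dv_bisimilar (n p k : ℕ)
    (E A : Matrix (Fin n) (Fin n) ℝ) (B : Matrix (Fin n) (Fin p) ℝ)
    (C : Matrix (Fin k) (Fin n) ℝ)
    (X₀ : Set (Fin n → ℝ))
    (M : Matrix (Fin n) (Fin n ⊕ Fin p) ℝ) (hMdef : M = Matrix.fromCols E (-B))
    (hrank : M.rank = n)
    (Mp : Matrix (Fin n ⊕ Fin p) (Fin n) ℝ) (hMp : M * Mp = 1)
    (N : Matrix (Fin n ⊕ Fin p) (Fin p) ℝ)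
    (hrange : LinearMap.range N.mulVecLin = LinearMap.ker M.mulVecLin)
    (horth : N.transpose * N = 1)
    (Ad : Matrix (Fin n) (Fin n) ℝ) (Cu : Matrix (Fin p) (Fin n) ℝ)
    (hAdCu : Matrix.fromRows Ad Cu = Mp * A)
    (Bd : Matrix (Fin n) (Fin p) ℝ) (Du : Matrix (Fin p) (Fin p) ℝ)
    (hBdDu : Matrix.fromRows Bd Du = N)
    -- transition relation of the descriptor system
    (TDS : (Fin n → ℝ) → (Fin n → ℝ) → Prop)
    (hTDS : TDS = fun x xp => ∃ u : Fin p → ℝ,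
      E.mulVec xp = A.mulVec x + B.mulVec u)
    -- transition relation of the driving-variable system
    (TDV : (Fin n → ℝ) → (Fin n → ℝ) → Prop)
    (hTDV : TDV = fun x xp => ∃ s : Fin p → ℝ,
      xp = Ad.mulVec x + Bd.mulVec s) :
    IsSimulation TDS TDV C.mulVec C.mulVec (fun x x' => x = x') ∧
    IsSimulation TDV TDS C.mulVec C.mulVec (fun x x' => x = x') ∧
    (∀ x₀ ∈ X₀, ∃ x₀' ∈ X₀, x₀ = x₀') ∧
    (∀ x₀' ∈ X₀, ∃ x₀ ∈ X₀, x₀ = x₀') :=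
  descriptor_dv_bisimilar_general n p k E A B C X₀ M hMdef Mp hMp N hrange Ad Cu hAdCu Bd Du hBdDu
    TDS hTDS TDV hTDV
end

section
/- Under the driving-variable construction, the descriptor system and its driving-variable system have equal full behaviour: a triple of sequences (u, x, y) : ℕ → ℝᵖ × ℝⁿ × ℝᵏ with x(0) ∈ X₀ satisfies E x(t+1) = A x(t) + B u(t) and y(t) = C x(t) for all t, if and only if there exists s : ℕ → ℝᵖ such that x(t+1) = A_d x(t) + B_d s(t), u(t) = C_u x(t) + D_u s(t), y(t) = C x(t) for all t and x(0) ∈ X₀. -/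
/-!
Stack the next state and the input into `w = (x(t+1), u(t))`. With `M = [E, -B]` the descriptor
equation reads `M w = A x(t)`; as `M M⁺ = 1` and `ker M = range N`, its solutions are exactly
`w = M⁺ A x(t) + N s` with `s` arbitrary, and the two blocks of this identity are the
driving-variable equations. Choosing such an `s` at every time `t` gives the driving variable.
-/

namespace Matrix

theorem mulVec_eq_iff_exists_eq_add_of_range_eq_ker {R m n l : Type*} [CommRing R] [Fintype m]
    [Fintype n] [Fintype l] [DecidableEq m] {M : Matrix m n R} {Mp : Matrix n m R}
    {N : Matrix n l R} (hMp : M * Mp = 1)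
    (hN : LinearMap.range N.mulVecLin = LinearMap.ker M.mulVecLin) (w : n → R) (b : m → R) :
    M *ᵥ w = b ↔ ∃ c, w = Mp *ᵥ b + N *ᵥ c := by
  have hMMp : M *ᵥ (Mp *ᵥ b) = b := by rw [mulVec_mulVec, hMp, one_mulVec]
  calc M *ᵥ w = b ↔ w - Mp *ᵥ b ∈ LinearMap.ker M.mulVecLin := by
        rw [LinearMap.mem_ker, mulVecLin_apply, mulVec_sub, hMMp, sub_eq_zero]
    _ ↔ ∃ c, N *ᵥ c = w - Mp *ᵥ b := by rw [← hN]; rfl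
    _ ↔ ∃ c, w = Mp *ᵥ b + N *ᵥ c := by simp only [eq_sub_iff_add_eq', eq_comm]

end Matrix

open Matrix

theorem descriptor_step_iff_exists_driving_variable {R m l q : Type*} [CommRing R] [Fintype m]
    [Fintype l] [Fintype q] [DecidableEq m]
    (E A : Matrix m m R) (B : Matrix m l R) {Mp : Matrix (m ⊕ l) m R}
    (hMp : fromCols E (-B) * Mp = 1) {Ad : Matrix m m R} {Cu : Matrix l m R}
    (hAdCu : fromRows Ad Cu = Mp * A) {Bd : Matrix m q R} {Du : Matrix l q R}
    (hN : LinearMap.range (fromRows Bd Du).mulVecLin = LinearMap.ker (fromCols E (-B)).mulVecLin)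
    (x x' : m → R) (u : l → R) :
    E *ᵥ x' = A *ᵥ x + B *ᵥ u ↔ ∃ c, x' = Ad *ᵥ x + Bd *ᵥ c ∧ u = Cu *ᵥ x + Du *ᵥ c := by
  have hM : E *ᵥ x' = A *ᵥ x + B *ᵥ u ↔ fromCols E (-B) *ᵥ Sum.elim x' u = A *ᵥ x := by
    rw [fromCols_mulVec_sumElim, neg_mulVec, ← sub_eq_add_neg, sub_eq_iff_eq_add]
  rw [hM, mulVec_eq_iff_exists_eq_add_of_range_eq_ker hMp hN, mulVec_mulVec, ← hAdCu]
  simp only [fromRows_mulVec, ← Sum.elim_add_add, Sum.elim_eq_iff]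

theorem descriptor_dv_equal_behaviour_general (n p k : ℕ)
    (E A : Matrix (Fin n) (Fin n) ℝ) (B : Matrix (Fin n) (Fin p) ℝ)
    (C : Matrix (Fin k) (Fin n) ℝ)
    (X₀ : Set (Fin n → ℝ))
    (M : Matrix (Fin n) (Fin n ⊕ Fin p) ℝ) (hMdef : M = Matrix.fromCols E (-B))
    (Mp : Matrix (Fin n ⊕ Fin p) (Fin n) ℝ) (hMp : M * Mp = 1)
    (N : Matrix (Fin n ⊕ Fin p) (Fin p) ℝ)
    (hrange : LinearMap.range N.mulVecLin = LinearMap.ker M.mulVecLin)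
    (Ad : Matrix (Fin n) (Fin n) ℝ) (Cu : Matrix (Fin p) (Fin n) ℝ)
    (hAdCu : Matrix.fromRows Ad Cu = Mp * A)
    (Bd : Matrix (Fin n) (Fin p) ℝ) (Du : Matrix (Fin p) (Fin p) ℝ)
    (hBdDu : Matrix.fromRows Bd Du = N) :
    ∀ (u : ℕ → Fin p → ℝ) (x : ℕ → Fin n → ℝ) (y : ℕ → Fin k → ℝ),
      (x 0 ∈ X₀ ∧ ∀ t, E.mulVec (x (t + 1)) = A.mulVec (x t) + B.mulVec (u t) ∧
          y t = C.mulVec (x t)) ↔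
        (x 0 ∈ X₀ ∧ ∃ s : ℕ → Fin p → ℝ, ∀ t,
          x (t + 1) = Ad.mulVec (x t) + Bd.mulVec (s t) ∧
          u t = Cu.mulVec (x t) + Du.mulVec (s t) ∧
          y t = C.mulVec (x t)) := by
  subst hMdef hBdDu
  intro u x y
  simp only [descriptor_step_iff_exists_driving_variable E A B hMp hAdCu hrange,
    ← exists_and_right, Classical.skolem, and_assoc]

theorem descriptor_dv_equal_behaviour (n p k : ℕ)
    (E A : Matrix (Fin n) (Fin n) ℝ) (B : Matrix (Fin n) (Fin p) ℝ)
    (C : Matrix (Fin k) (Fin n) ℝ)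
    (X₀ : Set (Fin n → ℝ))
    (M : Matrix (Fin n) (Fin n ⊕ Fin p) ℝ) (hMdef : M = Matrix.fromCols E (-B))
    (hrank : M.rank = n)
    (Mp : Matrix (Fin n ⊕ Fin p) (Fin n) ℝ) (hMp : M * Mp = 1)
    (N : Matrix (Fin n ⊕ Fin p) (Fin p) ℝ)
    (hrange : LinearMap.range N.mulVecLin = LinearMap.ker M.mulVecLin)
    (horth : N.transpose * N = 1)
    (Ad : Matrix (Fin n) (Fin n) ℝ) (Cu : Matrix (Fin p) (Fin n) ℝ)
    (hAdCu : Matrix.fromRows Ad Cu = Mp * A)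
    (Bd : Matrix (Fin n) (Fin p) ℝ) (Du : Matrix (Fin p) (Fin p) ℝ)
    (hBdDu : Matrix.fromRows Bd Du = N) :
    ∀ (u : ℕ → Fin p → ℝ) (x : ℕ → Fin n → ℝ) (y : ℕ → Fin k → ℝ),
      (x 0 ∈ X₀ ∧ ∀ t, E.mulVec (x (t + 1)) = A.mulVec (x t) + B.mulVec (u t) ∧
          y t = C.mulVec (x t)) ↔
        (x 0 ∈ X₀ ∧ ∃ s : ℕ → Fin p → ℝ, ∀ t,
          x (t + 1) = Ad.mulVec (x t) + Bd.mulVec (s t) ∧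
          u t = Cu.mulVec (x t) + Du.mulVec (s t) ∧
          y t = C.mulVec (x t)) :=
  descriptor_dv_equal_behaviour_general n p k E A B C X₀ M hMdef Mp hMp N hrange Ad Cu hAdCu Bd Du
    hBdDu
end

section
/- Control refinement for non-singular systems (trajectory form): Let S₁, S₂ be non-singular linear systems x_i⁺ = A_i x_i + B_i u_i with outputs C_i x_i in a common space Y and initial sets X₁₀, X₂₀. Suppose R is a simulation relation from S₁ to S₂ and ∀x₂₀ ∈ X₂₀ ∃x₁₀ ∈ X₁₀ with (x₁₀,x₂₀) ∈ R. Then for every x₂₀ ∈ X₂₀ and every input sequence u₁ : ℕ → U₁ and state sequence x₁ : ℕ → X₁ with x₁(0) ∈ X₁₀, (x₁(0), x₂₀) ∈ R and x₁(t+1) = A₁x₁(t) + B₁u₁(t), there exist sequences u₂ : ℕ → U₂ and x₂ : ℕ → X₂ with x₂(0) = x₂₀, x₂(t+1) = A₂x₂(t) + B₂u₂(t), and C₂x₂(t) = C₁x₁(t) for all t ∈ ℕ. -/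
theorem control_refinement_nonsingular (n₁ n₂ p₁ p₂ k : ℕ)
    (A₁ : Matrix (Fin n₁) (Fin n₁) ℝ) (B₁ : Matrix (Fin n₁) (Fin p₁) ℝ)
    (C₁ : Matrix (Fin k) (Fin n₁) ℝ)
    (A₂ : Matrix (Fin n₂) (Fin n₂) ℝ) (B₂ : Matrix (Fin n₂) (Fin p₂) ℝ)
    (C₂ : Matrix (Fin k) (Fin n₂) ℝ)
    (X₁₀ : Set (Fin n₁ → ℝ)) (X₂₀ : Set (Fin n₂ → ℝ))
    (R : (Fin n₁ → ℝ) → (Fin n₂ → ℝ) → Prop)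
    (hsim : ∀ x₁ x₂, R x₁ x₂ →
      C₁.mulVec x₁ = C₂.mulVec x₂ ∧
      ∀ u₁ : Fin p₁ → ℝ, ∃ u₂ : Fin p₂ → ℝ,
        R (A₁.mulVec x₁ + B₁.mulVec u₁) (A₂.mulVec x₂ + B₂.mulVec u₂))
    (hinit : ∀ x₂₀ ∈ X₂₀, ∃ x₁₀ ∈ X₁₀, R x₁₀ x₂₀) :
    ∀ x₂₀ ∈ X₂₀, ∀ (u₁ : ℕ → Fin p₁ → ℝ) (x₁ : ℕ → Fin n₁ → ℝ),
      x₁ 0 ∈ X₁₀ → R (x₁ 0) x₂₀ →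
      (∀ t, x₁ (t + 1) = A₁.mulVec (x₁ t) + B₁.mulVec (u₁ t)) →
      ∃ (u₂ : ℕ → Fin p₂ → ℝ) (x₂ : ℕ → Fin n₂ → ℝ),
        x₂ 0 = x₂₀ ∧
        (∀ t, x₂ (t + 1) = A₂.mulVec (x₂ t) + B₂.mulVec (u₂ t)) ∧
        ∀ t, C₂.mulVec (x₂ t) = C₁.mulVec (x₁ t) := by
  intro x₂₀ hx₂₀ u₁ x₁ h10 hR hdyn
  have key : ∀ t (x₂ : Fin n₂ → ℝ), R (x₁ t) x₂ →
      ∃ u₂, R (x₁ (t+1)) (A₂.mulVec x₂ + B₂.mulVec u₂) := by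
    intro t x₂ h
    obtain ⟨-, h2⟩ := hsim _ _ h
    obtain ⟨u₂, hu⟩ := h2 (u₁ t)
    exact ⟨u₂, by rw [hdyn t]; exact hu⟩
  let g : ∀ t, {x₂ // R (x₁ t) x₂} := fun t => Nat.rec ⟨x₂₀, hR⟩
    (fun t p => ⟨A₂.mulVec p.1 + B₂.mulVec (Classical.choose (key t p.1 p.2)),
      Classical.choose_spec (key t p.1 p.2)⟩) t
  exact ⟨fun t => Classical.choose (key t (g t).1 (g t).2), fun t => (g t).1, rfl,
    fun t => rfl, fun t => ((hsim _ _ (g t).2).1).symm⟩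
end
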